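/- arXiv:1206.3090 — 6 statements merged into one kernel-verified Lean document; each statement's English description precedes it below -/
import Mathlib

section
/- Let K be an infinite field, let n ≥ 1 and 1 ≤ k ≤ n, and let C = {a ∈ K^n : a_1 = … = a_k = 0} be the coordinate subspace defined by the vanishing of the first k coordinates. Let I ⊆ K[x_1,…,x_n] be an ideal and μ a natural number such that I ⊆ m_a^μ for every point a ∈ C. Then I ⊆ (x_1,…,x_k)^μ, the μ-th power of the ideal generated by x_1,…,x_k. -/
/-! Write `K[σ] = A[s]` with `A = K[sᶜ]`. A polynomial lies in `(X_i : i ∈ s)^μ` iff its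
`A`-coefficients in front of the `s`-monomials of degree `< μ` vanish. Sending `X_i` to itself
for `i ∈ s` and to `b_i ∈ K` otherwise maps `m_a` into `(X_i : i ∈ s)`, where `a` is `0` on `s`
and `b` off `s`; so these coefficients vanish at every `b`, hence are zero since `K` is
infinite. -/

/-- The maximal ideal of `K[x_i : i ∈ σ]` at the point `a`. -/
noncomputable def maxIdeal (K : Type*) [Field K] (σ : Type*) (a : σ → K) :
    Ideal (MvPolynomial σ K) :=
  Ideal.span (Set.range fun i => MvPolynomial.X i - MvPolynomial.C (a i))

namespace MvPolynomial

section splitVars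

variable {R σ : Type*} [CommSemiring R] (s : Set σ) [DecidablePred (· ∈ s)]

noncomputable def splitVars : MvPolynomial σ R ≃ₐ[R] MvPolynomial s (MvPolynomial ↥sᶜ R) :=
  (renameEquiv R (Equiv.Set.sumCompl s)).symm.trans (sumAlgEquiv R s ↥sᶜ)

variable {s}

lemma splitVars_X_of_mem {i : σ} (hi : i ∈ s) :
    splitVars s (X i : MvPolynomial σ R) = X ⟨i, hi⟩ := by
  simp [splitVars, Equiv.Set.sumCompl_symm_apply_of_mem hi, sumAlgEquiv_X_inl]

lemma splitVars_X_of_notMem {i : σ} (hi : i ∉ s) :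
    splitVars s (X i : MvPolynomial σ R) = C (X ⟨i, hi⟩) := by
  simp [splitVars, Equiv.Set.sumCompl_symm_apply_of_notMem hi, sumAlgEquiv_X_inr]

lemma splitVars_symm_X (i : s) :
    (splitVars s).symm (X i : MvPolynomial s (MvPolynomial ↥sᶜ R)) = X (i : σ) := by
  simp [splitVars, sumAlgEquiv_symm_X]

variable (s) in
lemma map_idealOfVars_splitVars_symm :
    (idealOfVars s (MvPolynomial ↥sᶜ R)).map (splitVars s).symm = Ideal.span (X '' s) := by
  rw [Ideal.map_span, ← Set.range_comp, Set.image_eq_range]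
  simp only [Function.comp_def, splitVars_symm_X]

lemma mem_span_X_image_pow_iff {μ : ℕ} {f : MvPolynomial σ R} :
    f ∈ Ideal.span (X '' s) ^ μ ↔ ∀ d : s →₀ ℕ, d.degree < μ → (splitVars s f).coeff d = 0 := by
  rw [← mem_pow_idealOfVars_iff', ← map_idealOfVars_splitVars_symm, ← Ideal.map_pow,
    Ideal.mem_map_of_equiv]
  exact ⟨by rintro ⟨g, hg, rfl⟩; simpa using hg, fun hf => ⟨_, hf, by simp⟩⟩

variable (s) in
noncomputable def evalCompl (b : ↥sᶜ → R) : MvPolynomial σ R →ₐ[R] MvPolynomial s R :=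
  (mapAlgHom (aeval b)).comp (splitVars s).toAlgHom

lemma coeff_evalCompl (b : ↥sᶜ → R) (f : MvPolynomial σ R) (d : s →₀ ℕ) :
    (evalCompl s b f).coeff d = eval b ((splitVars s f).coeff d) := by
  simp [evalCompl, mapAlgHom_apply, coeff_map]

lemma evalCompl_X_of_mem (b : ↥sᶜ → R) {i : σ} (hi : i ∈ s) :
    evalCompl s b (X i) = X ⟨i, hi⟩ := by
  simp [evalCompl, splitVars_X_of_mem hi]

lemma evalCompl_X_of_notMem (b : ↥sᶜ → R) {i : σ} (hi : i ∉ s) :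
    evalCompl s b (X i) = C (b ⟨i, hi⟩) := by
  simp [evalCompl, splitVars_X_of_notMem hi]

end splitVars

lemma map_maxIdeal_evalCompl_le {K σ : Type*} [Field K] {s : Set σ} [DecidablePred (· ∈ s)]
    {a : σ → K} (ha : ∀ i ∈ s, a i = 0) :
    (maxIdeal K σ a).map (evalCompl s fun i : ↥sᶜ => a i) ≤ idealOfVars s K := by
  rw [maxIdeal, Ideal.map_span, Ideal.span_le]
  rintro _ ⟨_, ⟨i, rfl⟩, rfl⟩
  by_cases hi : i ∈ s
  · simpa [evalCompl_X_of_mem _ hi, ha i hi] using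
      (Ideal.subset_span ⟨⟨i, hi⟩, rfl⟩ : X ⟨i, hi⟩ ∈ idealOfVars s K)
  · simp [evalCompl_X_of_notMem _ hi]

end MvPolynomial

open MvPolynomial

theorem le_span_X_image_pow_of_le_maxIdeal_pow {K σ : Type*} [Field K] [Infinite K] {s : Set σ}
    {I : Ideal (MvPolynomial σ K)} {μ : ℕ}
    (h : ∀ a : σ → K, (∀ i ∈ s, a i = 0) → I ≤ maxIdeal K σ a ^ μ) :
    I ≤ Ideal.span (X '' s) ^ μ := by
  classical
  intro f hf
  refine mem_span_X_image_pow_iff.mpr fun d hd => MvPolynomial.funext fun b => ?_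
  let a : σ → K := fun i => if hi : i ∈ s then 0 else b ⟨i, hi⟩
  have ha : ∀ i ∈ s, a i = 0 := fun i hi => dif_pos hi
  have hb : (fun i : ↥sᶜ => a i) = b := funext fun i => dif_neg i.2
  have hmem : evalCompl s b f ∈ idealOfVars s K ^ μ := by
    rw [← hb]
    refine Ideal.pow_right_mono (map_maxIdeal_evalCompl_le ha) μ ?_
    rw [← Ideal.map_pow]
    exact Ideal.mem_map_of_mem _ (h a ha hf)
  simpa [coeff_evalCompl] using (mem_pow_idealOfVars_iff' μ _).mp hmem d hd

theorem order_ge_on_center_imp_mem_power_general (K : Type*) [Field K] [Infinite K]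
    (n k : ℕ)
    (I : Ideal (MvPolynomial (Fin n) K)) (μ : ℕ)
    (h : ∀ a : Fin n → K, (∀ i : Fin n, (i : ℕ) < k → a i = 0) →
      I ≤ maxIdeal K (Fin n) a ^ μ) :
    I ≤ (Ideal.span {g : MvPolynomial (Fin n) K |
      ∃ i : Fin n, (i : ℕ) < k ∧ g = MvPolynomial.X i}) ^ μ := by
  have hgens : {g : MvPolynomial (Fin n) K | ∃ i : Fin n, (i : ℕ) < k ∧ g = X i} =
      X '' {i : Fin n | (i : ℕ) < k} := by
    ext g; simp [eq_comm]
  rw [hgens]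
  exact le_span_X_image_pow_of_le_maxIdeal_pow h

/-- If an ideal `I` has order `≥ μ` at every point of the coordinate subspace
`C = {a : a_1 = … = a_k = 0}`, then `I ⊆ (x_1,…,x_k)^μ`. -/
theorem order_ge_on_center_imp_mem_power (K : Type*) [Field K] [Infinite K]
    (n k : ℕ) (hn : 1 ≤ n) (hk1 : 1 ≤ k) (hk2 : k ≤ n)
    (I : Ideal (MvPolynomial (Fin n) K)) (μ : ℕ)
    (h : ∀ a : Fin n → K, (∀ i : Fin n, (i : ℕ) < k → a i = 0) →
      I ≤ maxIdeal K (Fin n) a ^ μ) :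
    I ≤ (Ideal.span {g : MvPolynomial (Fin n) K |
      ∃ i : Fin n, (i : ℕ) < k ∧ g = MvPolynomial.X i}) ^ μ :=
  order_ge_on_center_imp_mem_power_general K n k I μ h
end

section
/- Let K be a field of characteristic zero, let I be an ideal of K[x_1,…,x_n], let μ ≥ 1 be a natural number, and let 0 ≤ i ≤ μ−1. Then for every point a ∈ K^n, I ⊆ m_a^μ if and only if D^i(I) ⊆ m_a^{μ−i}. Equivalently, supp(I,μ) = supp(D^i(I), μ−i). -/
/-- The derivative ideal `D(I)`: generated by all elements of `I` together with all
their first partial derivatives. -/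
noncomputable def derivIdeal {K : Type*} [Field K] {σ : Type*}
    (I : Ideal (MvPolynomial σ K)) : Ideal (MvPolynomial σ K) :=
  Ideal.span ((I : Set (MvPolynomial σ K)) ∪
    {g | ∃ f ∈ I, ∃ j : σ, g = MvPolynomial.pderiv j f})

/-- The iterated derivative ideal `D^i(I)`. -/
noncomputable def derivIdealIter {K : Type*} [Field K] {σ : Type*}
    (i : ℕ) (I : Ideal (MvPolynomial σ K)) : Ideal (MvPolynomial σ K) :=
  derivIdeal^[i] I

/-!
At `a`, the Euler derivation `E = ∑ⱼ (xⱼ - aⱼ) ∂ⱼ` acts on `m_a^r / m_a^(r+1)` as multiplication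
by `r`. So if `f ∈ m_a^(k+1)` and all `∂ⱼ f ∈ m_a^(k+1)`, then `(k+1) f ≡ E f ≡ 0` modulo
`m_a^(k+2)`, and in characteristic zero `f ∈ m_a^(k+2)`. Together with the Leibniz rule, which
gives `∂ⱼ (m_a^(k+1)) ⊆ m_a^k`, this shows `J ⊆ m_a^(k+2) ↔ D(J) ⊆ m_a^(k+1)`; the theorem
follows by iterating.
-/

open MvPolynomial

theorem Derivation.map_mem_pow_of_mem_pow_succ {R A : Type*} [CommRing R] [CommRing A]
    [Algebra R A] (D : Derivation R A A) (I : Ideal A) :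
    ∀ {k : ℕ} {f : A}, f ∈ I ^ (k + 1) → D f ∈ I ^ k
  | 0, _, _ => by simp
  | k + 1, f, hf => by
    rw [pow_succ] at hf
    refine Submodule.mul_induction_on hf (fun g hg h hh => ?_) fun x y hx hy => ?_
    · rw [D.leibniz, smul_eq_mul, smul_eq_mul]
      refine add_mem (Ideal.mul_mem_right _ _ hg) ?_
      rw [mul_comm, pow_succ]
      exact Ideal.mul_mem_mul (D.map_mem_pow_of_mem_pow_succ I hg) hh
    · rw [map_add]
      exact add_mem hx hy

theorem X_sub_C_mem_maxIdeal {K σ : Type*} [Field K] (a : σ → K) (j : σ) :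
    X j - C (a j) ∈ maxIdeal K σ a :=
  Ideal.subset_span ⟨j, rfl⟩

section Euler

variable {K σ : Type*} [Field K] [Fintype σ]

noncomputable def eulerDerivation (a : σ → K) :
    Derivation K (MvPolynomial σ K) (MvPolynomial σ K) :=
  ∑ j, (X j - C (a j)) • pderiv j

theorem eulerDerivation_apply (a : σ → K) (f : MvPolynomial σ K) :
    eulerDerivation a f = ∑ j, (X j - C (a j)) * pderiv j f := by
  rw [eulerDerivation, ← Derivation.coeFnAddMonoidHom_apply, map_sum, Finset.sum_apply]
  rfl

theorem eulerDerivation_X_sub_C (a : σ → K) (i : σ) :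
    eulerDerivation a (X i - C (a i)) = X i - C (a i) := by
  classical
  simp [eulerDerivation_apply, pderiv_X, Pi.single_apply]

theorem eulerDerivation_mem_pow_succ (a : σ → K) {k : ℕ} {f : MvPolynomial σ K}
    (hf : ∀ j, pderiv j f ∈ maxIdeal K σ a ^ k) :
    eulerDerivation a f ∈ maxIdeal K σ a ^ (k + 1) := by
  rw [eulerDerivation_apply, pow_succ']
  exact Ideal.sum_mem _ fun j _ => Ideal.mul_mem_mul (X_sub_C_mem_maxIdeal a j) (hf j)

theorem eulerDerivation_mem_maxIdeal (a : σ → K) (f : MvPolynomial σ K) :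
    eulerDerivation a f ∈ maxIdeal K σ a := by
  simpa using eulerDerivation_mem_pow_succ a (k := 0) (f := f) (by simp)

theorem eulerDerivation_sub_self_mem_sq (a : σ → K) {f : MvPolynomial σ K}
    (hf : f ∈ maxIdeal K σ a) : eulerDerivation a f - f ∈ maxIdeal K σ a ^ 2 := by
  induction hf using Submodule.span_induction with
  | mem _ hx =>
    obtain ⟨i, rfl⟩ := hx
    rw [eulerDerivation_X_sub_C, sub_self]
    exact zero_mem _
  | zero => simp
  | add x y _ _ hx hy =>
    rw [map_add, add_sub_add_comm]
    exact add_mem hx hy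
  | smul c x hxm hx =>
    rw [smul_eq_mul, Derivation.leibniz, smul_eq_mul, smul_eq_mul,
      show c * eulerDerivation a x + x * eulerDerivation a c - c * x
        = c * (eulerDerivation a x - x) + x * eulerDerivation a c by ring, sq]
    rw [sq] at hx
    exact add_mem (Ideal.mul_mem_left _ _ hx)
      (Ideal.mul_mem_mul hxm (eulerDerivation_mem_maxIdeal a c))

theorem eulerDerivation_sub_nsmul_mem_pow_succ (a : σ → K) :
    ∀ {r : ℕ} {f : MvPolynomial σ K}, f ∈ maxIdeal K σ a ^ r →
      eulerDerivation a f - r • f ∈ maxIdeal K σ a ^ (r + 1)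
  | 0, f, _ => by simpa using eulerDerivation_mem_maxIdeal a f
  | r + 1, f, hf => by
    rw [pow_succ] at hf
    refine Submodule.mul_induction_on hf (fun g hg h hh => ?_) fun x y hx hy => ?_
    · rw [Derivation.leibniz, smul_eq_mul, smul_eq_mul,
        show g * eulerDerivation a h + h * eulerDerivation a g - (r + 1) • (g * h)
          = g * (eulerDerivation a h - h) + (eulerDerivation a g - r • g) * h by
            simp only [nsmul_eq_mul]; push_cast; ring]
      refine add_mem ?_ ?_
      · rw [show r + 1 + 1 = r + 2 by rfl, pow_add]
        exact Ideal.mul_mem_mul hg (eulerDerivation_sub_self_mem_sq a hh)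
      · rw [pow_succ]
        exact Ideal.mul_mem_mul (eulerDerivation_sub_nsmul_mem_pow_succ a hg) hh
    · rw [map_add, smul_add, add_sub_add_comm]
      exact add_mem hx hy

theorem mem_maxIdeal_pow_succ_of_pderiv_mem [CharZero K] (a : σ → K) {k : ℕ}
    {f : MvPolynomial σ K} (hf : f ∈ maxIdeal K σ a ^ (k + 1))
    (hd : ∀ j, pderiv j f ∈ maxIdeal K σ a ^ (k + 1)) : f ∈ maxIdeal K σ a ^ (k + 2) := by
  have hkf : ((k + 1 : ℕ) : K) • f ∈ maxIdeal K σ a ^ (k + 2) := by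
    rw [Nat.cast_smul_eq_nsmul, ← sub_sub_cancel (eulerDerivation a f) ((k + 1) • f)]
    exact sub_mem (eulerDerivation_mem_pow_succ a hd)
      (eulerDerivation_sub_nsmul_mem_pow_succ a hf)
  simpa [Nat.cast_add_one_ne_zero] using
    Submodule.smul_of_tower_mem _ ((k + 1 : ℕ) : K)⁻¹ hkf

end Euler

theorem derivIdeal_le_maxIdeal_pow_iff {K σ : Type*} [Field K] [CharZero K] [Fintype σ]
    (a : σ → K) (k : ℕ) (J : Ideal (MvPolynomial σ K)) :
    derivIdeal J ≤ maxIdeal K σ a ^ (k + 1) ↔ J ≤ maxIdeal K σ a ^ (k + 2) := by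
  refine ⟨fun h f hf => ?_, fun h => ?_⟩
  · exact mem_maxIdeal_pow_succ_of_pderiv_mem a (h (Ideal.subset_span (.inl hf)))
      fun j => h (Ideal.subset_span (.inr ⟨f, hf, j, rfl⟩))
  · rw [derivIdeal, Ideal.span_le]
    rintro x (hx | ⟨f, hf, j, rfl⟩)
    · exact Ideal.pow_le_pow_right (Nat.le_succ _) (h hx)
    · exact (pderiv j).map_mem_pow_of_mem_pow_succ _ (h hf)

theorem derivIdealIter_succ {K σ : Type*} [Field K] (i : ℕ) (I : Ideal (MvPolynomial σ K)) :
    derivIdealIter (i + 1) I = derivIdeal (derivIdealIter i I) :=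
  Function.iterate_succ_apply' derivIdeal i I

theorem supp_derivIdealIter_general (K : Type*) [Field K] [CharZero K] (n : ℕ)
    (I : Ideal (MvPolynomial (Fin n) K)) (μ i : ℕ) (hi : i ≤ μ - 1)
    (a : Fin n → K) :
    I ≤ maxIdeal K (Fin n) a ^ μ ↔
      derivIdealIter i I ≤ maxIdeal K (Fin n) a ^ (μ - i) := by
  induction i with
  | zero => rfl
  | succ i ih =>
    obtain ⟨k, hk⟩ : ∃ k, μ - i = k + 2 := ⟨μ - i - 2, by omega⟩
    rw [ih (by omega), derivIdealIter_succ, hk,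
      show μ - (i + 1) = k + 1 by omega, derivIdeal_le_maxIdeal_pow_iff]

/-- Giraud–Villamayor: in characteristic zero, for `0 ≤ i ≤ μ-1`,
`supp(I,μ) = supp(D^i(I), μ-i)`, i.e. `I ⊆ m_a^μ ↔ D^i(I) ⊆ m_a^{μ-i}` for every point `a`. -/
theorem supp_derivIdealIter (K : Type*) [Field K] [CharZero K] (n : ℕ)
    (I : Ideal (MvPolynomial (Fin n) K)) (μ i : ℕ) (hμ : 1 ≤ μ) (hi : i ≤ μ - 1)
    (a : Fin n → K) :
    I ≤ maxIdeal K (Fin n) a ^ μ ↔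
      derivIdealIter i I ≤ maxIdeal K (Fin n) a ^ (μ - i) :=
  supp_derivIdealIter_general K n I μ i hi a
end

section
/- Let K be a field of characteristic zero, let I be an ideal of K[x_1,…,x_n], and let μ ≥ 1. Then supp(I,μ) = {a ∈ K^n : f(a) = 0 for all f ∈ D^{μ−1}(I)}, i.e., supp(I,μ) is the common vanishing locus of the ideal D^{μ−1}(I); in particular supp(I,μ) is a Zariski closed subset of K^n. -/
/-!
Translating `a` to the origin turns `m_a^μ` into the ideal of polynomials without monomials of
degree `< μ`. Since `∂_j` sends the coefficient of `x^(d + e_j)` to the coefficient of `x^d`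
multiplied by `d_j + 1`, which is nonzero in characteristic zero, `f ∈ m_a^(μ+1)` iff `f ∈ m_a`
and every `∂_j f ∈ m_a^μ`. Hence `I ⊆ m_a^(μ+2)` iff `D(I) ⊆ m_a^(μ+1)`, and by induction
`I ⊆ m_a^μ` iff `D^(μ-1)(I) ⊆ m_a`, i.e. iff `D^(μ-1)(I)` vanishes at `a`.
-/

open MvPolynomial Finsupp

namespace MvPolynomial

section CommSemiring

variable {R σ : Type*} [CommSemiring R]

theorem pderiv_mem_pow_idealOfVars {f : MvPolynomial σ R} {μ : ℕ}
    (hf : f ∈ idealOfVars σ R ^ (μ + 1)) (j : σ) : pderiv j f ∈ idealOfVars σ R ^ μ := by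
  rw [mem_pow_idealOfVars_iff'] at hf ⊢
  intro d hd
  rw [coeff_pderiv, hf _ (by rw [map_add, degree_single]; omega), zero_mul]

theorem mem_pow_idealOfVars_succ_iff [NoZeroDivisors R] [CharZero R] {f : MvPolynomial σ R}
    {μ : ℕ} : f ∈ idealOfVars σ R ^ (μ + 1) ↔
      f ∈ idealOfVars σ R ∧ ∀ j, pderiv j f ∈ idealOfVars σ R ^ μ := by
  refine ⟨fun hf => ⟨Ideal.pow_le_self μ.succ_ne_zero hf, pderiv_mem_pow_idealOfVars hf⟩, ?_⟩
  rintro ⟨hf, hpderiv⟩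
  rw [← pow_one (idealOfVars σ R), mem_pow_idealOfVars_iff'] at hf
  rw [mem_pow_idealOfVars_iff']
  intro d hd
  obtain rfl | ⟨j, hj⟩ := eq_or_ne d 0 |>.imp_right Finsupp.ne_iff.mp
  · exact hf 0 (by simp)
  obtain ⟨d, rfl⟩ := le_iff_exists_add'.mp (single_le_iff.mpr (Nat.one_le_iff_ne_zero.mpr hj))
  have h := (mem_pow_idealOfVars_iff' _ _).mp (hpderiv j) d
    (by rw [map_add, degree_single] at hd; omega)
  rw [coeff_pderiv] at h
  exact (mul_eq_zero.mp h).resolve_right (Nat.cast_add_one_ne_zero _)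

end CommSemiring

section CommRing

variable {R σ : Type*} [CommRing R]

noncomputable def shift (a : σ → R) : MvPolynomial σ R ≃ₐ[R] MvPolynomial σ R :=
  AlgEquiv.ofAlgHom (aeval fun i => X i + C (a i)) (aeval fun i => X i - C (a i))
    (by ext; simp) (by ext; simp)

@[simp]
theorem shift_X (a : σ → R) (i : σ) : shift a (X i) = X i + C (a i) := by
  simp [shift]

@[simp]
theorem shift_C (a : σ → R) (r : R) : shift a (C r) = C r := by
  simp [shift]

theorem pderiv_shift (a : σ → R) (j : σ) (f : MvPolynomial σ R) :
    pderiv j (shift a f) = shift a (pderiv j f) := by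
  classical
  induction f using MvPolynomial.induction_on with
  | C r => simp
  | add p q hp hq => simp [hp, hq]
  | mul_X p i hp =>
    obtain rfl | hij := eq_or_ne j i
    · simp [hp]
    · simp [hp, pderiv_X_of_ne hij.symm]

theorem constantCoeff_shift (a : σ → R) (f : MvPolynomial σ R) :
    constantCoeff (shift a f) = eval a f := by
  induction f using MvPolynomial.induction_on with
  | C r => simp
  | add p q hp hq => simp [hp, hq]
  | mul_X p i hp => simp [hp]

end CommRing

end MvPolynomial

section Field

variable {K σ : Type*} [Field K]

theorem map_shift_maxIdeal (a : σ → K) :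
    (maxIdeal K σ a).map (shift a) = idealOfVars σ K := by
  rw [maxIdeal, Ideal.map_span, ← Set.range_comp]
  congr 2
  funext i
  simp [sub_eq_add_neg]

theorem mem_maxIdeal_pow_iff {a : σ → K} {f : MvPolynomial σ K} {μ : ℕ} :
    f ∈ maxIdeal K σ a ^ μ ↔ shift a f ∈ idealOfVars σ K ^ μ := by
  rw [← map_shift_maxIdeal, ← Ideal.map_pow]
  exact (Ideal.apply_mem_of_equiv_iff (f := (shift a).toRingEquiv)).symm

theorem mem_maxIdeal_iff {a : σ → K} {f : MvPolynomial σ K} :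
    f ∈ maxIdeal K σ a ↔ eval a f = 0 := by
  rw [← pow_one (maxIdeal K σ a), mem_maxIdeal_pow_iff, mem_pow_idealOfVars_iff',
    ← constantCoeff_shift]
  refine ⟨fun h => h 0 (by simp), fun h d hd => ?_⟩
  rw [Nat.lt_one_iff, degree_eq_zero_iff] at hd
  exact hd ▸ h

theorem derivIdeal_le_iff {I J : Ideal (MvPolynomial σ K)} :
    derivIdeal I ≤ J ↔ I ≤ J ∧ ∀ f ∈ I, ∀ j, pderiv j f ∈ J := by
  rw [derivIdeal, Ideal.span_le, Set.union_subset_iff]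
  refine and_congr_right' ⟨fun h f hf j => h ⟨f, hf, j, rfl⟩, ?_⟩
  rintro h _ ⟨f, hf, j, rfl⟩
  exact h f hf j

end Field

section CharZero

variable {K σ : Type*} [Field K] [CharZero K]

theorem mem_maxIdeal_pow_succ_iff {a : σ → K} {f : MvPolynomial σ K} {μ : ℕ} :
    f ∈ maxIdeal K σ a ^ (μ + 1) ↔
      f ∈ maxIdeal K σ a ∧ ∀ j, pderiv j f ∈ maxIdeal K σ a ^ μ := by
  rw [mem_maxIdeal_pow_iff, mem_pow_idealOfVars_succ_iff]
  refine and_congr ?_ (forall_congr' fun j => ?_)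
  · rw [← pow_one (maxIdeal K σ a), mem_maxIdeal_pow_iff, pow_one]
  · rw [mem_maxIdeal_pow_iff, pderiv_shift]

theorem derivIdeal_le_maxIdeal_pow_succ_iff {a : σ → K} {I : Ideal (MvPolynomial σ K)} {μ : ℕ} :
    derivIdeal I ≤ maxIdeal K σ a ^ (μ + 1) ↔ I ≤ maxIdeal K σ a ^ (μ + 2) := by
  rw [derivIdeal_le_iff]
  constructor
  · rintro ⟨hI, hpderiv⟩ f hf
    exact mem_maxIdeal_pow_succ_iff.mpr ⟨Ideal.pow_le_self μ.succ_ne_zero (hI hf), hpderiv f hf⟩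
  · intro hI
    exact ⟨hI.trans (Ideal.pow_le_pow_right (μ + 1).le_succ),
      fun f hf => (mem_maxIdeal_pow_succ_iff.mp (hI hf)).2⟩

theorem le_maxIdeal_pow_succ_iff {a : σ → K} {I : Ideal (MvPolynomial σ K)} {μ : ℕ} :
    I ≤ maxIdeal K σ a ^ (μ + 1) ↔ derivIdealIter μ I ≤ maxIdeal K σ a := by
  induction μ generalizing I with
  | zero => rw [zero_add, pow_one]; rfl
  | succ μ ih =>
    rw [← derivIdeal_le_maxIdeal_pow_succ_iff, ih, derivIdealIter, derivIdealIter,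
      Function.iterate_succ_apply]

end CharZero

/-- `supp(I,μ)` is the common vanishing locus of `D^{μ-1}(I)`; in particular it is
Zariski closed. -/
theorem supp_eq_zeroLocus_derivIdealIter (K : Type*) [Field K] [CharZero K] (n : ℕ)
    (I : Ideal (MvPolynomial (Fin n) K)) (μ : ℕ) (hμ : 1 ≤ μ) :
    {a : Fin n → K | I ≤ maxIdeal K (Fin n) a ^ μ} =
      {a : Fin n → K | ∀ f ∈ derivIdealIter (μ - 1) I, MvPolynomial.eval a f = 0} := by
  obtain ⟨ν, rfl⟩ := Nat.exists_eq_add_of_le' hμ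
  ext a
  exact le_maxIdeal_pow_succ_iff.trans (forall₂_congr fun _ _ => mem_maxIdeal_iff)
end

section
/- Let K be a field of characteristic zero, let I be an ideal of K[x_1,…,x_n], and let μ ≥ 1. Then for every point a ∈ K^n, H(I) ⊆ m_a^μ if and only if I ⊆ m_a^μ; that is, the homogenized ideal has the same support as the original: supp(H(I),μ) = supp(I,μ). -/
/-- The homogenized ideal
`H(I) = I + D(I)·T(I) + … + D^{μ-1}(I)·T(I)^{μ-1}` where `T(I) = D^{μ-1}(I)`. -/
noncomputable def homogIdeal {K : Type*} [Field K] {σ : Type*}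
    (μ : ℕ) (I : Ideal (MvPolynomial σ K)) : Ideal (MvPolynomial σ K) :=
  ∑ i ∈ Finset.range μ, derivIdealIter i I * (derivIdealIter (μ - 1) I) ^ i

/-!
Differentiation lowers the order of vanishing along any ideal `J` by at most one
(Leibniz rule on `J^(k+1) = J^k · J`), so `I ≤ J^μ` gives `D^i(I) ≤ J^(μ-i)`, in particular
`T(I) ≤ J`, and each summand of `H(I)` lies in `J^(μ-i) · J^i = J^μ`. Conversely `I` is the
summand `i = 0` of `H(I)`.
-/

theorem Derivation.map_mem_pow {R A : Type*} [CommRing R] [CommRing A] [Algebra R A]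
    (D : Derivation R A A) (J : Ideal A) :
    ∀ (k : ℕ), ∀ f ∈ J ^ (k + 1), D f ∈ J ^ k
  | 0, _, _ => by simp
  | k + 1, f, hf => by
    rw [pow_succ] at hf
    refine Submodule.mul_induction_on hf (fun p hp q hq => ?_) (fun x y hx hy => ?_)
    · rw [Derivation.leibniz, smul_eq_mul, smul_eq_mul, mul_comm q]
      refine Ideal.add_mem _ (Ideal.mul_mem_right _ _ hp) ?_
      exact pow_succ J k ▸ Ideal.mul_mem_mul (map_mem_pow D J k p hp) hq
    · rw [map_add]
      exact Ideal.add_mem _ hx hy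

section

variable {K : Type*} [Field K] {σ : Type*} {I J : Ideal (MvPolynomial σ K)}

theorem derivIdeal_le_pow_pred {k : ℕ} (h : I ≤ J ^ k) : derivIdeal I ≤ J ^ (k - 1) := by
  rw [derivIdeal, Ideal.span_le]
  rintro g (hg | ⟨f, hf, j, rfl⟩)
  · exact Ideal.pow_le_pow_right (Nat.sub_le k 1) (h hg)
  · cases k with
    | zero => simp
    | succ k => exact (MvPolynomial.pderiv j).map_mem_pow J k f (h hf)

theorem derivIdealIter_le_pow {μ : ℕ} (h : I ≤ J ^ μ) (i : ℕ) :
    derivIdealIter i I ≤ J ^ (μ - i) := by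
  induction i with
  | zero => simpa [derivIdealIter] using h
  | succ i ih =>
    rw [derivIdealIter, Function.iterate_succ_apply', ← Nat.sub_sub]
    exact derivIdeal_le_pow_pred ih

theorem le_homogIdeal {μ : ℕ} (hμ : 1 ≤ μ) : I ≤ homogIdeal μ I := by
  rw [homogIdeal, Ideal.sum_eq_sup]
  simpa [derivIdealIter] using
    Finset.le_sup (f := fun i => derivIdealIter i I * derivIdealIter (μ - 1) I ^ i)
      (Finset.mem_range.mpr hμ)

theorem homogIdeal_le_pow {μ : ℕ} (h : I ≤ J ^ μ) : homogIdeal μ I ≤ J ^ μ := by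
  rw [homogIdeal, Ideal.sum_eq_sup, Finset.sup_le_iff]
  intro i hi
  rw [Finset.mem_range] at hi
  have hT : derivIdealIter (μ - 1) I ≤ J := by
    simpa [Nat.sub_sub_self (by omega : 1 ≤ μ)] using derivIdealIter_le_pow h (μ - 1)
  calc derivIdealIter i I * derivIdealIter (μ - 1) I ^ i
      ≤ J ^ (μ - i) * J ^ i := mul_le_mul' (derivIdealIter_le_pow h i) (Ideal.pow_right_mono hT i)
    _ = J ^ μ := by rw [← pow_add, Nat.sub_add_cancel hi.le]

end

theorem supp_homogIdeal_general (K : Type*) [Field K] (n : ℕ)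
    (I : Ideal (MvPolynomial (Fin n) K)) (μ : ℕ) (hμ : 1 ≤ μ) (a : Fin n → K) :
    homogIdeal μ I ≤ maxIdeal K (Fin n) a ^ μ ↔ I ≤ maxIdeal K (Fin n) a ^ μ :=
  ⟨(le_homogIdeal hμ).trans, homogIdeal_le_pow⟩

/-- The homogenized ideal has the same support as the original:
`H(I) ⊆ m_a^μ ↔ I ⊆ m_a^μ` for every point `a`. -/
theorem supp_homogIdeal (K : Type*) [Field K] [CharZero K] (n : ℕ)
    (I : Ideal (MvPolynomial (Fin n) K)) (μ : ℕ) (hμ : 1 ≤ μ) (a : Fin n → K) :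
    homogIdeal μ I ≤ maxIdeal K (Fin n) a ^ μ ↔ I ≤ maxIdeal K (Fin n) a ^ μ :=
  supp_homogIdeal_general K n I μ hμ a
end

section
/- Let K be a field of characteristic zero, let I be an ideal of K[x_1,…,x_n], let μ ≥ 1, and let h ∈ T(I) = D^{μ−1}(I). Let φ be the K-algebra endomorphism of K[x_1,…,x_n] determined by φ(x_1) = x_1 + h and φ(x_j) = x_j for 2 ≤ j ≤ n. Then φ(I) ⊆ H(I): the image under φ of every element of I lies in the homogenized ideal H(I). -/
open MvPolynomial Finset

set_option linter.unusedSectionVars false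

section aux
variable {K : Type*} [Field K] {σ : Type*} [DecidableEq σ]

lemma iter_pderiv_C (j : σ) (a : K) (i : ℕ) :
    (pderiv j)^[i+1] (C a : MvPolynomial σ K) = 0 := by
  induction i with
  | zero => simp [pderiv_C]
  | succ i ih => rw [Function.iterate_succ_apply', ih]; simp

lemma iter_pderiv_mul_X_ne (j j' : σ) (hne : j' ≠ j) (p : MvPolynomial σ K) (i : ℕ) :
    (pderiv j)^[i] (p * X j') = (pderiv j)^[i] p * X j' := by
  induction i with
  | zero => simp
  | succ i ih =>
      rw [Function.iterate_succ_apply', ih, Function.iterate_succ_apply', pderiv_mul,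
        pderiv_X_of_ne hne, mul_zero, add_zero]

lemma iter_pderiv_mul_X_self (j : σ) (p : MvPolynomial σ K) (i : ℕ) :
    (pderiv j)^[i+1] (p * X j) =
      (pderiv j)^[i+1] p * X j + (i+1) • (pderiv j)^[i] p := by
  induction i with
  | zero => simp [pderiv_mul]; ring
  | succ i ih =>
      rw [show i+1+1 = (i+1)+1 from rfl, Function.iterate_succ_apply' (pderiv j) (i+1), ih,
        map_add, pderiv_mul, pderiv_X_self, mul_one, map_nsmul,
        ← Function.iterate_succ_apply' (pderiv j) (i+1),
        ← Function.iterate_succ_apply' (pderiv j) i, succ_nsmul ((pderiv j)^[i+1] p) (i+1)]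
      abel

end aux

section taylor
variable {K : Type*} [Field K] [CharZero K] {σ : Type*} [DecidableEq σ]

lemma fact_inv_succ (i : ℕ) :
    ((Nat.factorial (i+1) : K))⁻¹ * ((i : K) + 1) = (Nat.factorial i : K)⁻¹ := by
  have h1 : ((Nat.factorial (i+1) : ℕ) : K) = ((i : K)+1) * (Nat.factorial i : K) := by
    rw [Nat.factorial_succ]; push_cast; ring
  have h2 : ((i : K) + 1) ≠ 0 := by
    have := Nat.cast_add_one_ne_zero (R := K) i
    simpa using this
  have h3 : (Nat.factorial i : K) ≠ 0 := Nat.cast_ne_zero.2 (Nat.factorial_ne_zero i)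
  rw [h1, mul_inv]
  field_simp

lemma taylor_dvd (j0 : σ) (h : MvPolynomial σ K) (f : MvPolynomial σ K) :
    ∀ N : ℕ, h ^ N ∣
      MvPolynomial.aeval (fun j : σ => if j = j0 then X j + h else X j) f
        - ∑ i ∈ Finset.range N,
            ((Nat.factorial i : K))⁻¹ • ((pderiv j0)^[i] f * h ^ i) := by
  set g : σ → MvPolynomial σ K := fun j => if j = j0 then X j + h else X j with hg
  induction f using MvPolynomial.induction_on with
  | C a =>
      intro N
      cases N with
      | zero => simpa using one_dvd _
      | succ M =>
          rw [Finset.sum_eq_single_of_mem 0 (by simp)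
            (fun b _ hb => by
              obtain ⟨k, rfl⟩ := Nat.exists_eq_succ_of_ne_zero hb
              rw [iter_pderiv_C, zero_mul, smul_zero])]
          simp
  | add p q hp hq =>
      intro N
      have hiter : ∀ i : ℕ, (pderiv j0)^[i] (p + q) = (pderiv j0)^[i] p + (pderiv j0)^[i] q := by
        intro i
        induction i with
        | zero => rfl
        | succ i ih => rw [Function.iterate_succ_apply', ih, map_add,
            Function.iterate_succ_apply', Function.iterate_succ_apply']
      have hS : ∑ i ∈ Finset.range N, ((Nat.factorial i : K))⁻¹ • ((pderiv j0)^[i] (p+q) * h ^ i)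
          = (∑ i ∈ Finset.range N, ((Nat.factorial i : K))⁻¹ • ((pderiv j0)^[i] p * h ^ i))
            + ∑ i ∈ Finset.range N, ((Nat.factorial i : K))⁻¹ • ((pderiv j0)^[i] q * h ^ i) := by
        rw [← Finset.sum_add_distrib]
        exact Finset.sum_congr rfl fun i _ => by rw [hiter, add_mul, smul_add]
      rw [map_add, hS, add_sub_add_comm]
      exact dvd_add (hp N) (hq N)
  | mul_X p j hp =>
      intro N
      by_cases hj : j = j0
      · subst hj
        cases N with
        | zero => simpa using one_dvd _
        | succ M =>
            have haev : MvPolynomial.aeval g (p * X j) =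
                MvPolynomial.aeval g p * (X j + h) := by
              rw [map_mul, MvPolynomial.aeval_X, hg]; simp
            set a : ℕ → MvPolynomial σ K :=
              fun i => ((Nat.factorial i : K))⁻¹ • ((pderiv j)^[i] p * h ^ i) with ha
            have hns : ∀ i : ℕ, ∀ q : MvPolynomial σ K, (i+1) • q = ((i:K)+1) • q :=
              fun i q => by rw [← Nat.cast_smul_eq_nsmul K]; norm_num
            have hterm : ∀ i : ℕ,
                ((Nat.factorial (i+1) : K))⁻¹ • ((pderiv j)^[i+1] (p * X j) * h ^ (i+1)) =
                  a (i+1) * X j + a i * h := by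
              intro i
              rw [iter_pderiv_mul_X_self, add_mul, smul_add]
              congr 1
              · rw [ha, smul_mul_assoc]
                exact congrArg _ (by ring)
              · rw [hns, smul_mul_assoc, smul_smul, fact_inv_succ, ha, smul_mul_assoc,
                  mul_assoc, ← pow_succ]
            have hsum : ∑ i ∈ Finset.range (M+1),
                ((Nat.factorial i : K))⁻¹ • ((pderiv j)^[i] (p * X j) * h ^ i)
                = (∑ i ∈ Finset.range (M+1), a i) * X j
                  + (∑ i ∈ Finset.range M, a i) * h := by
              rw [Finset.sum_range_succ' _ M, Finset.sum_range_succ' a M,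
                Finset.sum_congr rfl (fun i _ => hterm i), Finset.sum_add_distrib]
              simp only [ha, Function.iterate_zero, id_eq, pow_zero, mul_one,
                Nat.factorial_zero, Nat.cast_one, inv_one, one_smul, add_mul, Finset.sum_mul]
              ring
            rw [haev, hsum]
            have hd1 : h ^ (M+1) ∣ (MvPolynomial.aeval g p
                - ∑ i ∈ Finset.range (M+1), a i) * X j := (hp (M+1)).mul_right _
            have hd2 : h ^ (M+1) ∣ (MvPolynomial.aeval g p
                - ∑ i ∈ Finset.range M, a i) * h := by
              rw [pow_succ]; exact mul_dvd_mul (hp M) dvd_rfl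
            have := dvd_add hd1 hd2
            convert this using 1
            ring
      · have haev : MvPolynomial.aeval g (p * X j) =
            MvPolynomial.aeval g p * X j := by
          rw [map_mul, MvPolynomial.aeval_X, hg]; simp [hj]
        have hsum : ∑ i ∈ Finset.range N,
            ((Nat.factorial i : K))⁻¹ • ((pderiv j0)^[i] (p * X j) * h ^ i)
            = (∑ i ∈ Finset.range N,
                ((Nat.factorial i : K))⁻¹ • ((pderiv j0)^[i] p * h ^ i)) * X j := by
          rw [Finset.sum_mul]
          refine Finset.sum_congr rfl fun i _ => ?_
          rw [iter_pderiv_mul_X_ne j0 j hj, smul_mul_assoc]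
          exact congrArg _ (by ring)
        rw [haev, hsum, ← sub_mul]
        exact (hp N).mul_right _

end taylor


section ideals
variable {K : Type*} [Field K] {σ : Type*} (I : Ideal (MvPolynomial σ K))

lemma iter_pderiv_mem (j : σ) {f : MvPolynomial σ K} (hf : f ∈ I) (i : ℕ) :
    (pderiv j)^[i] f ∈ derivIdealIter i I := by
  induction i with
  | zero => exact hf
  | succ i ih =>
      have h1 : derivIdealIter (i+1) I = derivIdeal (derivIdealIter i I) := by
        simp only [derivIdealIter, Function.iterate_succ_apply']
      rw [h1, Function.iterate_succ_apply']
      exact Ideal.subset_span (Or.inr ⟨_, ih, j, rfl⟩)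

lemma summand_le_homog (μ i : ℕ) (hi : i ∈ Finset.range μ) :
    derivIdealIter i I * (derivIdealIter (μ - 1) I) ^ i ≤ homogIdeal μ I := by
  unfold homogIdeal
  exact Finset.single_le_sum (f := fun i => derivIdealIter i I * (derivIdealIter (μ-1) I) ^ i)
    (fun i _ => bot_le) hi

end ideals

/-- For `h ∈ T(I) = D^{μ-1}(I)`, the substitution `x_1 ↦ x_1 + h` (fixing the other
variables) maps `I` into the homogenized ideal `H(I)`. -/
theorem image_subst_mem_homogIdeal (K : Type*) [Field K] [CharZero K] (n : ℕ)
    (hn : 0 < n) (I : Ideal (MvPolynomial (Fin n) K)) (μ : ℕ) (hμ : 1 ≤ μ)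
    (h : MvPolynomial (Fin n) K) (hh : h ∈ derivIdealIter (μ - 1) I) :
    ∀ f ∈ I,
      MvPolynomial.aeval (fun j : Fin n =>
        if j = (⟨0, hn⟩ : Fin n) then MvPolynomial.X j + h else MvPolynomial.X j) f ∈
      homogIdeal μ I := by
  intro f hf
  obtain ⟨m, rfl⟩ : ∃ m, μ = m + 1 := ⟨μ - 1, (Nat.succ_pred_eq_of_pos hμ).symm⟩
  have hm : m + 1 - 1 = m := rfl
  set j0 : Fin n := ⟨0, hn⟩
  set S : MvPolynomial (Fin n) K :=
    ∑ i ∈ Finset.range (m+1), ((Nat.factorial i : K))⁻¹ • ((pderiv j0)^[i] f * h ^ i) with hS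
  obtain ⟨c, hc⟩ := taylor_dvd j0 h f (m+1)
  have hSm : S ∈ homogIdeal (m+1) I := by
    apply Ideal.sum_mem
    intro i hi
    have hmem : (pderiv j0)^[i] f * h ^ i
        ∈ derivIdealIter i I * (derivIdealIter m I) ^ i :=
      Ideal.mul_mem_mul (iter_pderiv_mem I j0 hf i) (Ideal.pow_mem_pow hh i)
    have := summand_le_homog I (m+1) i hi hmem
    rw [MvPolynomial.smul_eq_C_mul]
    exact Ideal.mul_mem_left _ _ this
  have hrem : h ^ (m+1) * c ∈ homogIdeal (m+1) I := by
    have h1 : h ^ (m+1) * c = (h * c) * h ^ m := by ring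
    have hmem : (h * c) * h ^ m ∈ derivIdealIter m I * (derivIdealIter m I) ^ m :=
      Ideal.mul_mem_mul (Ideal.mul_mem_right c _ hh) (Ideal.pow_mem_pow hh m)
    rw [h1]
    exact summand_le_homog I (m+1) m (by simp) hmem
  have hmem := Ideal.add_mem _ hSm hrem
  have heq : MvPolynomial.aeval (fun j : Fin n =>
      if j = j0 then MvPolynomial.X j + h else MvPolynomial.X j) f
      = S + h ^ (m+1) * c := by rw [← hc]; ring
  rw [heq]
  exact hmem
end

section
/- Let K be a field of characteristic zero, let I be an ideal of K[x_1,…,x_n], let μ ≥ 1, and let h ∈ D^{μ−1}(I). Let φ be the K-algebra endomorphism of K[x_1,…,x_n] with φ(x_1) = x_1 + h and φ(x_j) = x_j for 2 ≤ j ≤ n. Then for every point a ∈ K^n with I ⊆ m_a^μ one has h(a) = 0, and consequently (φ f)(a) = f(a) for every f ∈ K[x_1,…,x_n]; that is, supp(I,μ) is contained in the fixed-point locus of φ. -/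
open MvPolynomial

lemma pderiv_mem_pow {K : Type*} [Field K] {σ : Type*}
    (M : Ideal (MvPolynomial σ K)) (j : σ) :
    ∀ μ : ℕ, ∀ f ∈ M ^ (μ + 1), pderiv j f ∈ M ^ μ := by
  intro μ
  induction μ with
  | zero => intro f _; simp
  | succ μ ih =>
    intro f hf
    rw [pow_succ'] at hf
    refine Submodule.smul_induction_on hf ?_ ?_
    · intro m hm g hg
      have : pderiv j (m * g) = m * pderiv j g + pderiv j m * g := by
        simp [pderiv_mul]; ring
      rw [smul_eq_mul, this]
      exact Ideal.add_mem _
        (by rw [pow_succ']; exact Submodule.smul_mem_smul hm (ih g hg))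
        (Ideal.mul_mem_left _ _ (by exact Ideal.pow_le_pow_right (by omega) hg))
    · intro x y hx hy
      rw [map_add]; exact Ideal.add_mem _ hx hy

lemma derivIdeal_le_pow {K : Type*} [Field K] {σ : Type*}
    (I M : Ideal (MvPolynomial σ K)) (μ : ℕ) (hI : I ≤ M ^ (μ + 1)) :
    derivIdeal I ≤ M ^ μ := by
  rw [derivIdeal, Ideal.span_le]
  rintro g (hg | ⟨f, hf, j, rfl⟩)
  · exact Ideal.pow_le_pow_right (by omega) (hI hg)
  · exact pderiv_mem_pow M j μ f (hI hf)

lemma iter_le {K : Type*} [Field K] {σ : Type*} :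
    ∀ (i k : ℕ) (I M : Ideal (MvPolynomial σ K)), I ≤ M ^ (i + k) →
      derivIdealIter i I ≤ M ^ k := by
  intro i
  induction i with
  | zero => intro k I M hI; simpa [derivIdealIter] using hI
  | succ i ih =>
    intro k I M hI
    rw [derivIdealIter, Function.iterate_succ_apply]
    exact ih k _ M (derivIdeal_le_pow I M (i + k) (by convert hI using 2; omega))

/-- `supp(I,μ)` is contained in the fixed-point locus of the substitution
`φ : x_1 ↦ x_1 + h` with `h ∈ D^{μ-1}(I)`: at every point `a` with `I ⊆ m_a^μ` one has
`h(a) = 0`, hence `(φ f)(a) = f(a)` for all `f`. -/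
theorem supp_subset_fixedPoints (K : Type*) [Field K] [CharZero K] (n : ℕ)
    (hn : 0 < n) (I : Ideal (MvPolynomial (Fin n) K)) (μ : ℕ) (hμ : 1 ≤ μ)
    (h : MvPolynomial (Fin n) K) (hh : h ∈ derivIdealIter (μ - 1) I) :
    ∀ a : Fin n → K, I ≤ maxIdeal K (Fin n) a ^ μ →
      MvPolynomial.eval a h = 0 ∧
      ∀ f : MvPolynomial (Fin n) K,
        MvPolynomial.eval a (MvPolynomial.aeval (fun j : Fin n =>
          if j = (⟨0, hn⟩ : Fin n) then MvPolynomial.X j + h else MvPolynomial.X j) f) =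
        MvPolynomial.eval a f := by
  intro a ha
  have hle : derivIdealIter (μ - 1) I ≤ maxIdeal K (Fin n) a ^ 1 := by
    apply iter_le (μ - 1) 1 I
    have : μ - 1 + 1 = μ := by omega
    rw [this]; exact ha
  have hker : maxIdeal K (Fin n) a ≤ RingHom.ker (eval a) := by
    rw [maxIdeal, Ideal.span_le]
    rintro g ⟨i, rfl⟩
    simp [RingHom.mem_ker]
  have hha : eval a h = 0 := by
    have := hker (by simpa using hle hh)
    rwa [RingHom.mem_ker] at this
  refine ⟨hha, fun f => ?_⟩
  set φ : Fin n → MvPolynomial (Fin n) K := fun j =>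
    if j = (⟨0, hn⟩ : Fin n) then MvPolynomial.X j + h else MvPolynomial.X j
  have key : (MvPolynomial.aeval a).comp (MvPolynomial.aeval φ) =
      (MvPolynomial.aeval a : MvPolynomial (Fin n) K →ₐ[K] K) := by
    apply MvPolynomial.algHom_ext
    intro j
    simp only [AlgHom.comp_apply, aeval_X, φ]
    by_cases hj : j = (⟨0, hn⟩ : Fin n) <;>
      simp [hj, MvPolynomial.aeval_def, hha]
  calc eval a (aeval φ f) = (aeval a) (aeval φ f) := by rw [MvPolynomial.aeval_def]; rfl
    _ = (aeval a) f := by rw [← AlgHom.comp_apply, key]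
    _ = eval a f := by rw [MvPolynomial.aeval_def]; rfl
end
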